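/- Assumptions and notation as in the Section 4 construction: (W,S) is an irreducible Coxeter system of finite rank with m_{st} < ∞ for all s,t ∈ S, whose Coxeter graph G = (S,E) is not a tree, with fixed s_1, s_2 ∈ S such that m := m_{s_1s_2} ≥ 4; p : G′ → G is the universal covering of G with fixed edge {s_1′, s_2′} over {s_1, s_2}. Then the prescribed linear operators, one for each s ∈ S, on V := ⊕_{a∈S′} ℂ α_a define a representation of W on V; that is, each operator is an involution, the operator assigned to s and the operator assigned to t satisfy ((st)-operator)^{m_{st}} = id for all s,t ∈ S, and hence s ↦ (its operator) extends to a group homomorphism from W to GL(V). -/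

import Mathlib

/-- The Coxeter graph of a Coxeter matrix `M`: two distinct vertices `s, t` are adjacent iff
`M s t ≥ 3` or `M s t = ∞` (encoded as `0` in Mathlib), i.e. iff `M s t ≠ 2`. -/
def coxeterGraph {B : Type*} (M : CoxeterMatrix B) : SimpleGraph B where
  Adj s t := s ≠ t ∧ M s t ≠ 2
  symm := by
    constructor
    intro s t h
    exact ⟨h.1.symm, by rw [M.symmetric]; exact h.2⟩
  loopless := by constructor; intro s h; exact h.1 rfl

open Finsupp Classical in
/-- The Section 4 operators: for each `s ∈ S`, a linear operator on `V = ⊕_{a ∈ S′} ℂ α_a`,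
where `S′` is the vertex set of the universal covering `p : G′ → G` of the Coxeter graph `G`,
and `α_a = Finsupp.single a 1`.  Here `{s₁′, s₂′}` is the fixed edge of `G′` over the edge
`{s₁, s₂}` of `G` (with `m = m_{s₁s₂} ≥ 4`).  The defining formulas are:
(i) if `p a = s` then `s·α_a = −α_a`;
(ii) `s₁·α_{s₂′} = α_{s₂′} + 2cos(2π/m) α_{s₁′}` and `s₂·α_{s₁′} = α_{s₁′} + 2cos(2π/m) α_{s₂′}`;
(iii) otherwise, if `s` is not adjacent to `p a` in `G` (equivalently, under the covering
hypotheses, `a` has no neighbour in `G′` lying over `s`), then `s·α_a = α_a`;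
(iv) otherwise `s·α_a = α_a + 2cos(π/m_{s,p(a)}) α_b`, where `b` is the unique neighbour of `a`
in `G′` with `p b = s`. -/
noncomputable def sec4Act {B B' : Type*} (M : CoxeterMatrix B) (G' : SimpleGraph B')
    (p : B' → B) (s₁ s₂ : B) (s₁' s₂' : B') (s : B) : (B' →₀ ℂ) →ₗ[ℂ] (B' →₀ ℂ) :=
  Finsupp.lift _ ℂ _ fun a =>
    if p a = s then -single a 1
    else if s = s₁ ∧ a = s₂' then
      single s₂' 1 + (2 * Real.cos (2 * Real.pi / (M s₁ s₂ : ℝ)) : ℂ) • single s₁' 1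
    else if s = s₂ ∧ a = s₁' then
      single s₁' 1 + (2 * Real.cos (2 * Real.pi / (M s₁ s₂ : ℝ)) : ℂ) • single s₂' 1
    else if h : ∃ b, G'.Adj a b ∧ p b = s then
      single a 1 + (2 * Real.cos (Real.pi / (M s (p a) : ℝ)) : ℂ) • single h.choose 1
    else single a 1

/-- The subspace of vectors fixed by all the operators `σ s`. -/
def fixedSubmodule {B V : Type*} [AddCommGroup V] [Module ℂ V]
    (σ : B → V →ₗ[ℂ] V) : Submodule ℂ V where
  carrier := {v | ∀ s, σ s v = v}
  add_mem' := by
    intro a b ha hb s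
    simp [map_add, ha s, hb s]
  zero_mem' := by intro s; simp
  smul_mem' := by
    intro c a ha s
    simp [map_smul, ha s]


/-!
For an edge `u — v` of `G'` over `s — t`, the operators of `s` and `t` act on the plane spanned by
`α_u, α_v` as the two reflections of the geometric representation of the dihedral group of
order `2 m_{st}`: the off-diagonal coefficient is `c = 2 cos (kπ / m_{st}) = z + z⁻¹` with
`z = exp (ikπ / m_{st})` and `0 < k < m_{st}` (`k = 2` on the distinguished edge), so `σ_s σ_t`
has the eigenvalues `z^{±2}` there and `(σ_s σ_t)^{m_{st}}` is trivial. Since `p` is a covering,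
every `α_u` with `p u = s` lies in such a plane (a degenerate one, `α_v = 0`, when `m_{st} = 2`).
For `p a ∉ {s, t}`, `σ_s` and `σ_t` move `α_a` only by multiples of such vectors, and correcting
`α_a` inside these planes yields a vector fixed by both `σ_s` and `σ_t`.
-/

open Finsupp

theorem Module.End.pow_apply_of_apply_eq_smul {R M : Type*} [Semiring R] [AddCommMonoid M]
    [Module R M] {f : Module.End R M} {μ : R} {x : M} (h : f x = μ • x) (n : ℕ) :
    (f ^ n) x = μ ^ n • x := by
  induction n with
  | zero => simp
  | succ n ih => rw [pow_succ, Module.End.mul_apply, h, map_smul, ih, smul_smul, ← pow_succ']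

section Dihedral

variable {K V : Type*} [Field K] [AddCommGroup V] [Module K V] {A T : Module.End K V} {c : K}
  {u v : V} {m : ℕ}

/-- Over `ℂ`, these are the numbers `2 cos (kπ / m)` with `0 < k < m`, for `z = exp (ikπ / m)`. -/
def IsDihedralParam (m : ℕ) (c : K) : Prop :=
  ∃ z : K, z ≠ 0 ∧ z ^ 2 ≠ 1 ∧ z ^ (2 * m) = 1 ∧ c = z + z⁻¹

structure IsDihedralPair (A T : Module.End K V) (c : K) (u v : V) : Prop where
  left_u : A u = -u
  right_v : T v = -v
  left_v : A v = v + c • u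
  right_u : T u = u + c • v

theorem IsDihedralPair.symm (h : IsDihedralPair A T c u v) : IsDihedralPair T A c v u :=
  ⟨h.right_v, h.left_u, h.right_u, h.left_v⟩

open Complex in
theorem isDihedralParam_two_mul_cos {k m : ℕ} (hk : 0 < k) (hkm : k < m) :
    IsDihedralParam m (2 * Real.cos (k * Real.pi / m) : ℂ) := by
  have hm : (m : ℂ) ≠ 0 := by exact_mod_cast (hk.trans hkm).ne'
  have hζ := isPrimitiveRoot_exp (2 * m) (by omega)
  have hz : exp (↑(k * Real.pi / m) * I) = exp (2 * Real.pi * I / ↑(2 * m)) ^ k := by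
    rw [← exp_nat_mul]
    push_cast
    field_simp
  refine ⟨exp (↑(k * Real.pi / m) * I), exp_ne_zero _, ?_, ?_, ?_⟩
  · rw [hz, ← pow_mul, Ne, hζ.pow_eq_one_iff_dvd]
    exact fun h => (Nat.le_of_dvd (by omega) h).not_gt (by omega)
  · rw [hz, ← pow_mul, pow_mul', hζ.pow_eq_one, one_pow]
  · rw [← exp_neg, ← neg_mul, ← two_cos]
    push_cast
    rfl

theorem IsDihedralParam.sq_ne_four (hc : IsDihedralParam m c) : c ^ 2 ≠ 4 := by
  obtain ⟨z, hz0, hz1, -, rfl⟩ := hc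
  intro h
  have : (z ^ 2 - 1) ^ 2 = 0 := by
    field_simp at h
    linear_combination h
  exact hz1 (by simpa [sub_eq_zero] using this)

/-- `z • u + v` and `z⁻¹ • u + v` are eigenvectors of `A * T` for the eigenvalues `z ^ 2` and
`z⁻¹ ^ 2`, which are `m`-th roots of unity, and they span `u` and `v` because `z ≠ z⁻¹`. -/
theorem IsDihedralPair.pow_apply_eq (h : IsDihedralPair A T c u v) (hc : IsDihedralParam m c) :
    ((A * T) ^ m) u = u ∧ ((A * T) ^ m) v = v := by
  obtain ⟨z, hz0, hz1, hzm, hcz⟩ := hc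
  have hne : z - z⁻¹ ≠ 0 := by
    rw [sub_ne_zero]
    intro h
    apply hz1
    field_simp at h
    linear_combination h
  have eigen (w : K) (hw : w * c - 1 = w ^ 2) (hw0 : w ^ (2 * m) = 1) :
      w • u + v ∈ LinearMap.eqLocus ((A * T) ^ m) 1 := by
    have : (A * T) (w • u + v) = w ^ 2 • (w • u + v) := by
      simp only [Module.End.mul_apply, map_add, map_smul, map_neg, h.right_u, h.right_v,
        h.left_u, h.left_v]
      match_scalars
      · linear_combination (c + w) * hw
      · linear_combination hw
    rw [LinearMap.mem_eqLocus, Module.End.pow_apply_of_apply_eq_smul this, ← pow_mul, hw0,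
      one_smul, Module.End.one_apply]
  have hspan :
      Submodule.span K {z • u + v, z⁻¹ • u + v} ≤ LinearMap.eqLocus ((A * T) ^ m) 1 := by
    rw [Submodule.span_le, Set.insert_subset_iff, Set.singleton_subset_iff]
    refine ⟨eigen z ?_ hzm, eigen z⁻¹ ?_ (by rw [inv_pow, hzm, inv_one])⟩ <;>
      (rw [hcz]; field_simp; ring)
  constructor
  · refine hspan (Submodule.mem_span_pair.2 ⟨(z - z⁻¹)⁻¹, -(z - z⁻¹)⁻¹, ?_⟩)
    match_scalars <;> field_simp <;> ring
  · refine hspan (Submodule.mem_span_pair.2 ⟨-z⁻¹ * (z - z⁻¹)⁻¹, z * (z - z⁻¹)⁻¹, ?_⟩)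
    match_scalars <;> field_simp <;> ring

theorem IsDihedralPair.span_le (h : IsDihedralPair A T c u v) (hc : IsDihedralParam m c) :
    Submodule.span K {u, v} ≤
      LinearMap.eqLocus ((A * T) ^ m) 1 ⊓ LinearMap.eqLocus ((T * A) ^ m) 1 := by
  have hAT := h.pow_apply_eq hc
  have hTA := h.symm.pow_apply_eq hc
  rw [Submodule.span_le, Set.insert_subset_iff, Set.singleton_subset_iff]
  exact ⟨⟨hAT.1, hTA.2⟩, ⟨hAT.2, hTA.1⟩⟩

theorem IsDihedralPair.exists_correction (h : IsDihedralPair A T c u v) (hc : c ^ 2 ≠ 4)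
    (γ : K) : ∃ w ∈ Submodule.span K {u, v}, A w = w - γ • u ∧ T w = w := by
  have hd : 4 - c ^ 2 ≠ 0 := sub_ne_zero.2 hc.symm
  refine ⟨(2 * γ / (4 - c ^ 2)) • u + (c * γ / (4 - c ^ 2)) • v,
    Submodule.mem_span_pair.2 ⟨_, _, rfl⟩, ?_, ?_⟩
  · simp only [map_add, map_smul, h.left_u, h.left_v]
    match_scalars
    · field_simp
      ring
    · field_simp
  · simp only [map_add, map_smul, h.right_u, h.right_v]
    match_scalars
    · field_simp
    · field_simp
      ring

end Dihedral

section Covering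

open Classical

variable {B B' : Type*} {M : CoxeterMatrix B} {G' : SimpleGraph B'} {p : B' → B}
  {s₁ s₂ : B} {s₁' s₂' : B'}

noncomputable def sec4EdgeCoeff (M : CoxeterMatrix B) (p : B' → B) (s₁ s₂ : B) (s₁' s₂' a b : B') :
    ℂ :=
  if s(a, b) = s(s₁', s₂') then 2 * Real.cos (2 * Real.pi / (M s₁ s₂ : ℝ))
  else 2 * Real.cos (Real.pi / (M (p a) (p b) : ℝ))

theorem sec4EdgeCoeff_comm (a b : B') :
    sec4EdgeCoeff M p s₁ s₂ s₁' s₂' a b = sec4EdgeCoeff M p s₁ s₂ s₁' s₂' b a := by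
  rw [sec4EdgeCoeff, sec4EdgeCoeff, Sym2.eq_swap, M.symmetric (p a)]

local notation "σ" => sec4Act M G' p s₁ s₂ s₁' s₂'

theorem sec4Act_single (s : B) (a : B') :
    σ s (single a 1) =
      if p a = s then -single a 1
      else if s = s₁ ∧ a = s₂' then
        single s₂' 1 + (2 * Real.cos (2 * Real.pi / (M s₁ s₂ : ℝ)) : ℂ) • single s₁' 1
      else if s = s₂ ∧ a = s₁' then
        single s₁' 1 + (2 * Real.cos (2 * Real.pi / (M s₁ s₂ : ℝ)) : ℂ) • single s₂' 1
      else if h : ∃ b, G'.Adj a b ∧ p b = s then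
        single a 1 + (2 * Real.cos (Real.pi / (M s (p a) : ℝ)) : ℂ) • single h.choose 1
      else single a 1 := by
  rw [sec4Act, lift_apply, sum_single_index (by simp), one_smul]

theorem sec4Act_single_of_eq {s : B} {a : B'} (h : p a = s) : σ s (single a 1) = -single a 1 := by
  rw [sec4Act_single, if_pos h]

variable (hcover : ∀ a : B', Set.BijOn p (G'.neighborSet a) ((coxeterGraph M).neighborSet (p a)))
  (hedge : G'.Adj s₁' s₂') (hp₁ : p s₁' = s₁) (hp₂ : p s₂' = s₂)

include hedge hp₁ hp₂ in
theorem sec4Act_single_of_forall_not_adj {s : B} {a : B'} (hs : p a ≠ s)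
    (h : ∀ b, G'.Adj a b → p b ≠ s) : σ s (single a 1) = single a 1 := by
  rw [sec4Act_single, if_neg hs,
    if_neg fun ⟨hs₁, ha⟩ => h s₁' (ha ▸ hedge.symm) (hp₁.trans hs₁.symm),
    if_neg fun ⟨hs₂, ha⟩ => h s₂' (ha ▸ hedge) (hp₂.trans hs₂.symm),
    dif_neg fun ⟨b, hab, hb⟩ => h b hab hb]

include hcover hedge hp₁ hp₂ in
theorem sec4Act_single_of_adj {a b : B'} (hab : G'.Adj a b) :
    σ (p b) (single a 1) = single a 1 + sec4EdgeCoeff M p s₁ s₂ s₁' s₂' a b • single b 1 := by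
  have hne : p a ≠ p b := SimpleGraph.Adj.ne (G := coxeterGraph M) ((hcover a).mapsTo hab)
  rw [sec4Act_single, if_neg hne, sec4EdgeCoeff]
  by_cases hspecial : s(a, b) = s(s₁', s₂')
  · rw [if_pos hspecial]
    rcases Sym2.eq_iff.1 hspecial with ⟨rfl, rfl⟩ | ⟨rfl, rfl⟩
    · rw [if_neg fun h => hedge.ne h.2, if_pos ⟨hp₂, rfl⟩]
    · rw [if_pos ⟨hp₁, rfl⟩]
  · -- `b` is the only neighbour of `a` over `p b`: clauses (ii), (iii) do not apply, and
    -- `choose` picks `b`.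
    have huniq {a' b'} (ha : a = a') (hadj : G'.Adj a' b') (hpb : p b = p b') : b = b' :=
      (hcover a).injOn hab (ha ▸ hadj) hpb
    have hex : ∃ c, G'.Adj a c ∧ p c = p b := ⟨b, hab, rfl⟩
    rw [if_neg fun ⟨hs, ha⟩ => hspecial (by rw [ha, huniq ha hedge.symm (hs.trans hp₁.symm),
        Sym2.eq_swap]),
      if_neg fun ⟨hs, ha⟩ => hspecial (by rw [ha, huniq ha hedge (hs.trans hp₂.symm)]),
      dif_pos hex, if_neg hspecial, M.symmetric,
      (hcover a).injOn hex.choose_spec.1 hab hex.choose_spec.2]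

include hcover hedge hp₁ hp₂ in
theorem isDihedralPair_sec4Act_of_adj {u v : B'} (huv : G'.Adj u v) :
    IsDihedralPair (σ (p u)) (σ (p v)) (sec4EdgeCoeff M p s₁ s₂ s₁' s₂' u v)
      (single u 1) (single v 1) :=
  ⟨sec4Act_single_of_eq rfl, sec4Act_single_of_eq rfl,
    by rw [sec4Act_single_of_adj hcover hedge hp₁ hp₂ huv.symm, sec4EdgeCoeff_comm],
    sec4Act_single_of_adj hcover hedge hp₁ hp₂ huv⟩

include hcover hp₁ hp₂ in
theorem isDihedralParam_sec4EdgeCoeff (hm : 3 ≤ M s₁ s₂) {u v : B'} (huv : G'.Adj u v)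
    (h0 : M (p u) (p v) ≠ 0) :
    IsDihedralParam (M (p u) (p v)) (sec4EdgeCoeff M p s₁ s₂ s₁' s₂' u v) := by
  rw [sec4EdgeCoeff]
  split_ifs with hspecial
  · have hM : M (p u) (p v) = M s₁ s₂ := by
      rcases Sym2.eq_iff.1 hspecial with ⟨rfl, rfl⟩ | ⟨rfl, rfl⟩
      · rw [hp₁, hp₂]
      · rw [hp₁, hp₂, M.symmetric]
    rw [hM]
    simpa using isDihedralParam_two_mul_cos (k := 2) two_pos (by omega)
  · have h1 := M.off_diagonal _ _
      (SimpleGraph.Adj.ne (G := coxeterGraph M) ((hcover u).mapsTo huv))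
    simpa using isDihedralParam_two_mul_cos (k := 1) one_pos (by omega)

include hcover hedge hp₁ hp₂ in
theorem sec4Act_sec4Act_single (s : B) (a : B') : σ s (σ s (single a 1)) = single a 1 := by
  by_cases has : p a = s
  · rw [sec4Act_single_of_eq has, map_neg, sec4Act_single_of_eq has, neg_neg]
  by_cases hnb : ∃ b, G'.Adj a b ∧ p b = s
  · obtain ⟨b, hab, rfl⟩ := hnb
    rw [sec4Act_single_of_adj hcover hedge hp₁ hp₂ hab, map_add, map_smul,
      sec4Act_single_of_adj hcover hedge hp₁ hp₂ hab, sec4Act_single_of_eq rfl]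
    module
  · push Not at hnb
    rw [sec4Act_single_of_forall_not_adj hedge hp₁ hp₂ has hnb,
      sec4Act_single_of_forall_not_adj hedge hp₁ hp₂ has hnb]

include hcover hedge hp₁ hp₂ in
theorem sec4Act_mul_self (s : B) : σ s * σ s = 1 := by
  refine lhom_ext' fun a => LinearMap.ext_ring ?_
  exact sec4Act_sec4Act_single hcover hedge hp₁ hp₂ s a

include hcover hedge hp₁ hp₂ in
theorem exists_isDihedralPair_sec4Act (hm : 3 ≤ M s₁ s₂) {s t : B} (hst : s ≠ t)
    (h0 : M s t ≠ 0) {u : B'} (hu : p u = s) :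
    ∃ v c, IsDihedralPair (σ s) (σ t) c (single u 1) v ∧ IsDihedralParam (M s t) c := by
  subst hu
  by_cases hadj : (coxeterGraph M).Adj (p u) t
  · obtain ⟨v, huv, rfl⟩ := (hcover u).surjOn hadj
    exact ⟨_, _, isDihedralPair_sec4Act_of_adj hcover hedge hp₁ hp₂ huv,
      isDihedralParam_sec4EdgeCoeff hcover hp₁ hp₂ hm huv h0⟩
  · have h2 : M (p u) t = 2 := by
      by_contra h
      exact hadj ⟨hst, h⟩
    refine ⟨0, 0, ⟨sec4Act_single_of_eq rfl, by simp, by simp, ?_⟩, ?_⟩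
    · rw [zero_smul, add_zero]
      exact sec4Act_single_of_forall_not_adj hedge hp₁ hp₂ hst
        fun b hb hpb => hadj (hpb ▸ (hcover u).mapsTo hb)
    · rw [h2]
      simpa using isDihedralParam_two_mul_cos (k := 1) (m := 2) one_pos one_lt_two

include hcover hedge hp₁ hp₂ in
theorem exists_sec4Act_correction (hm : 3 ≤ M s₁ s₂) {s t : B} (hst : s ≠ t) (h0 : M s t ≠ 0)
    {a : B'} (has : p a ≠ s) :
    ∃ w, σ s w = w - (σ s (single a 1) - single a 1) ∧ σ t w = w ∧
      w ∈ LinearMap.eqLocus ((σ s * σ t) ^ M s t) 1 ⊓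
        LinearMap.eqLocus ((σ t * σ s) ^ M s t) 1 := by
  by_cases hnb : ∃ b, G'.Adj a b ∧ p b = s
  · obtain ⟨b, hab, rfl⟩ := hnb
    obtain ⟨v, c, hpair, hc⟩ :=
      exists_isDihedralPair_sec4Act hcover hedge hp₁ hp₂ hm hst h0 rfl
    obtain ⟨w, hw, hsw, htw⟩ :=
      hpair.exists_correction hc.sq_ne_four (sec4EdgeCoeff M p s₁ s₂ s₁' s₂' a b)
    refine ⟨w, ?_, htw, hpair.span_le hc hw⟩
    rw [hsw, sec4Act_single_of_adj hcover hedge hp₁ hp₂ hab, add_sub_cancel_left]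
  · push Not at hnb
    refine ⟨0, ?_, map_zero _, zero_mem _⟩
    rw [sec4Act_single_of_forall_not_adj hedge hp₁ hp₂ has hnb, map_zero, sub_self, sub_zero]

include hcover hedge hp₁ hp₂ in
theorem single_mem_eqLocus_sec4Act_pow (hm : 3 ≤ M s₁ s₂) {s t : B} (hst : s ≠ t)
    (h0 : M s t ≠ 0) (a : B') : single a 1 ∈ LinearMap.eqLocus ((σ s * σ t) ^ M s t) 1 := by
  have h0' : M t s ≠ 0 := M.symmetric s t ▸ h0
  by_cases has : p a = s
  · obtain ⟨v, c, hpair, hc⟩ :=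
      exists_isDihedralPair_sec4Act hcover hedge hp₁ hp₂ hm hst h0 has
    exact (hpair.pow_apply_eq hc).1
  by_cases hat : p a = t
  · obtain ⟨v, c, hpair, hc⟩ :=
      exists_isDihedralPair_sec4Act hcover hedge hp₁ hp₂ hm hst.symm h0' hat
    rw [M.symmetric] at hc
    exact (hpair.symm.pow_apply_eq hc).2
  obtain ⟨ws, hws_s, hws_t, hws⟩ :=
    exists_sec4Act_correction hcover hedge hp₁ hp₂ hm hst h0 has
  obtain ⟨wt, hwt_t, hwt_s, hwt⟩ :=
    exists_sec4Act_correction hcover hedge hp₁ hp₂ hm hst.symm h0' hat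
  rw [M.symmetric t s] at hwt
  have hfix : (σ s * σ t) (single a 1 + ws + wt) = single a 1 + ws + wt := by
    have hs : σ s (single a 1 + ws + wt) = single a 1 + ws + wt := by
      rw [map_add, map_add, hws_s, hwt_s]
      abel
    have ht : σ t (single a 1 + ws + wt) = single a 1 + ws + wt := by
      rw [map_add, map_add, hws_t, hwt_t]
      abel
    rw [Module.End.mul_apply, ht, hs]
  have hmem : single a 1 + ws + wt ∈ LinearMap.eqLocus ((σ s * σ t) ^ M s t) 1 :=
    (Module.End.pow_apply _ _ _).trans (Function.iterate_fixed hfix _)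
  convert sub_mem (sub_mem hmem hws.1) hwt.2 using 1
  abel

include hcover hedge hp₁ hp₂ in
theorem sec4Act_isLiftable (hm : 3 ≤ M s₁ s₂) : CoxeterMatrix.IsLiftable M σ := by
  intro s t
  rcases eq_or_ne s t with rfl | hst
  · rw [M.diagonal, pow_one, sec4Act_mul_self hcover hedge hp₁ hp₂]
  rcases eq_or_ne (M s t) 0 with h0 | h0
  · rw [h0, pow_zero]
  refine lhom_ext' fun a => LinearMap.ext_ring ?_
  exact single_mem_eqLocus_sec4Act_pow hcover hedge hp₁ hp₂ hm hst h0 a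

end Covering

theorem statement5_general {B B' W : Type*} [Group W]
    (M : CoxeterMatrix B) (cs : CoxeterSystem M W)
    (s₁ s₂ : B) (hm : 4 ≤ M s₁ s₂)
    (G' : SimpleGraph B') (p : B' → B)
    (hcover : ∀ a : B', Set.BijOn p (G'.neighborSet a) ((coxeterGraph M).neighborSet (p a)))
    (s₁' s₂' : B') (hedge : G'.Adj s₁' s₂') (hp₁ : p s₁' = s₁) (hp₂ : p s₂' = s₂) :
    (∀ s : B, sec4Act M G' p s₁ s₂ s₁' s₂' s * sec4Act M G' p s₁ s₂ s₁' s₂' s = 1) ∧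
    (∀ s t : B, (sec4Act M G' p s₁ s₂ s₁' s₂' s * sec4Act M G' p s₁ s₂ s₁' s₂' t) ^ (M s t) = 1) ∧
    ∃ ρ : Representation ℂ W (B' →₀ ℂ),
      ∀ s : B, ρ (cs.simple s) = sec4Act M G' p s₁ s₂ s₁' s₂' s := by
  have hlift := sec4Act_isLiftable hcover hedge hp₁ hp₂ (by omega)
  exact ⟨sec4Act_mul_self hcover hedge hp₁ hp₂, hlift, cs.lift ⟨_, hlift⟩,
    cs.lift_apply_simple hlift⟩

/-- under the Section 4 assumptions, the operators `sec4Act M G' p s₁ s₂ s₁' s₂' s`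
define a representation of `W` on `V = B' →₀ ℂ`: each is an involution, the product of the
operators of `s` and `t` has order dividing `m_{st}`, and hence `s ↦ (its operator)` extends to
a group homomorphism `W → GL(V)`, i.e. to a representation of `W`. -/
theorem statement5 {B B' W : Type*} [Group W] [Fintype B]
    (M : CoxeterMatrix B) (cs : CoxeterSystem M W)
    (hfin : ∀ s t : B, M s t ≠ 0)
    (hconn : (coxeterGraph M).Connected)
    (hnottree : ¬ (coxeterGraph M).IsTree)
    (s₁ s₂ : B) (hm : 4 ≤ M s₁ s₂)
    (G' : SimpleGraph B') (htree : G'.IsTree) (p : B' → B)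
    (hmorph : ∀ a b : B', G'.Adj a b → (coxeterGraph M).Adj (p a) (p b))
    (hsurj : Function.Surjective p)
    (hcover : ∀ a : B', Set.BijOn p (G'.neighborSet a) ((coxeterGraph M).neighborSet (p a)))
    (s₁' s₂' : B') (hedge : G'.Adj s₁' s₂') (hp₁ : p s₁' = s₁) (hp₂ : p s₂' = s₂) :
    (∀ s : B, sec4Act M G' p s₁ s₂ s₁' s₂' s * sec4Act M G' p s₁ s₂ s₁' s₂' s = 1) ∧
    (∀ s t : B, (sec4Act M G' p s₁ s₂ s₁' s₂' s * sec4Act M G' p s₁ s₂ s₁' s₂' t) ^ (M s t) = 1) ∧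
    ∃ ρ : Representation ℂ W (B' →₀ ℂ),
      ∀ s : B, ρ (cs.simple s) = sec4Act M G' p s₁ s₂ s₁' s₂' s :=
  statement5_general M cs s₁ s₂ hm G' p hcover s₁' s₂' hedge hp₁ hp₂
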